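/- Consider the two-layer drive-response networked sampled-data system under the Fast Control sampling pattern with integer l ≥ 1 (transmission channels sampled with period l·h, control channels with period h): define Φ̃^{1,1} = I_N ⊗ e^{A^1 l h} + W^1 ⊗ 𝓗^1(lh), Φ̃^{2,2} = I_N ⊗ e^{A^2 l h} + W^2 ⊗ 𝓗^2(lh), Φ̃^{2,1} = D^{2,1} ⊗ 𝓟^{2,1}(lh), Ψ̃^{K,K} = [Δ^K ⊗ (𝓑^K(lh) − 𝓑^K((l−1)h)), …, Δ^K ⊗ (𝓑^K(2h) − 𝓑^K(h)), Δ^K ⊗ 𝓑^K(h)] for K = 1,2, Φ̃_s = [[Φ̃^{1,1}, 0], [Φ̃^{2,1}, Φ̃^{2,2}]], Ψ̃_s = diag(Ψ̃^{1,1}, Ψ̃^{2,2}). Suppose: (1) for every μ ∈ ℂ and every nonzero row vector η ∈ ℂ^{1×Nn} with η Φ̃^{1,1} = μ η, one has η·[Δ^1 ⊗ 𝓑^1(lh), Δ^1 ⊗ 𝓑^1((l−1)h), …, Δ^1 ⊗ 𝓑^1(h)] ≠ 0; and (2) for every μ ∈ ℂ, every nonzero η ∈ ℂ^{1×Nn}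 with η Φ̃^{2,2} = μ η, and every ξ ∈ ℂ^{1×Nn} with ξ(μ I_{Nn} − Φ̃^{1,1}) = η Φ̃^{2,1}, the concatenated row vector [ξ·[Δ^1 ⊗ 𝓑^1(lh), …, Δ^1 ⊗ 𝓑^1(h)], η·[Δ^2 ⊗ 𝓑^2(lh), …, Δ^2 ⊗ 𝓑^2(h)]] is nonzero. Then the discrete-time system x(k+1) = Φ̃_s x(k) + Ψ̃_s u(k) is controllable. -/

import Mathlib

open Matrix
open scoped Kronecker

/-- Matrix exponential of a real square matrix. -/
noncomputable def matExp {k : Type*} [Fintype k] [DecidableEq k]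
    (A : Matrix k k ℝ) : Matrix k k ℝ := NormedSpace.exp A

/-- Entrywise integral `∫₀ʰ e^{Aτ} dτ`. -/
noncomputable def intExp {k : Type*} [Fintype k] [DecidableEq k]
    (A : Matrix k k ℝ) (h : ℝ) : Matrix k k ℝ :=
  Matrix.of fun i j => ∫ τ in (0:ℝ)..h, matExp (τ • A) i j

/-- A real matrix regarded as a complex matrix entrywise. -/
def cmap {a b : Type*} (M : Matrix a b ℝ) : Matrix a b ℂ := M.map Complex.ofReal

/-- `θ` is a (complex) eigenvalue of the complex matrix `M`. -/
def IsEig {k : Type*} [Fintype k] (M : Matrix k k ℂ) (θ : ℂ) : Prop :=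
  ∃ v : k → ℂ, v ≠ 0 ∧ M.mulVec v = θ • v

/-- Controllability of the discrete-time linear system `x(k+1) = F x(k) + G u(k)`:
every target state can be reached from every initial state in finite time. -/
def Controllable {q r : Type*} [Fintype q] [Fintype r]
    (F : Matrix q q ℝ) (G : Matrix q r ℝ) : Prop :=
  ∀ x₀ xf : q → ℝ, ∃ (T : ℕ) (u : ℕ → r → ℝ) (x : ℕ → q → ℝ),
    x 0 = x₀ ∧ (∀ k, x (k + 1) = F.mulVec (x k) + G.mulVec (u k)) ∧ x T = xf

/-!
Controllability follows from the Popov–Belevitch–Hautus eigenvector test. If the columns of the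
matrices `F ^ k * G` did not span the state space, a nonzero real covector `η` would annihilate
all of them; the span of the `η F ^ k` is then invariant under right multiplication by `F` and
killed by `G`, so over `ℂ` it contains a left eigenvector of `F` annihilating `G`.

A left eigenvector `(ξ, η)` of the block lower triangular `Φ̃_s` has either `η = 0`, and then `ξ`
is a left eigenvector of `Φ̃^{1,1}` (condition (1)), or `η` is a left eigenvector of `Φ̃^{2,2}` with
`ξ (μ I − Φ̃^{1,1}) = η Φ̃^{2,1}` (condition (2)). The column blocks of `Ψ̃^{K,K}` are the
successive differences `Δ ⊗ (𝓑(sh) − 𝓑((s−1)h))` and `𝓑(0) = 0`, so by telescoping a covector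
annihilating `Ψ̃^{K,K}` annihilates every block `Δ ⊗ 𝓑(sh)` of the concatenation.
-/

section Complexification

variable {a b : Type*}

lemma cmap_mul {c : Type*} [Fintype b] (M : Matrix a b ℝ) (N : Matrix b c ℝ) :
    cmap (M * N) = cmap M * cmap N :=
  Matrix.map_mul (f := Complex.ofRealHom)

lemma cmap_pow [Fintype a] [DecidableEq a] (M : Matrix a a ℝ) (k : ℕ) :
    cmap (M ^ k) = cmap M ^ k :=
  Matrix.map_pow M Complex.ofRealHom k

lemma cmap_sub (M N : Matrix a b ℝ) : cmap (M - N) = cmap M - cmap N :=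
  Matrix.map_sub _ Complex.ofReal_sub M N

lemma cmap_zero : cmap (0 : Matrix a b ℝ) = 0 :=
  Matrix.map_zero _ Complex.ofReal_zero

lemma cmap_fromBlocks {c d : Type*} (A : Matrix a b ℝ) (B : Matrix a d ℝ) (C : Matrix c b ℝ)
    (D : Matrix c d ℝ) :
    cmap (fromBlocks A B C D) = fromBlocks (cmap A) (cmap B) (cmap C) (cmap D) :=
  fromBlocks_map A B C D _

lemma ofReal_comp_vecMul [Fintype a] (v : a → ℝ) (M : Matrix a b ℝ) :
    Complex.ofReal ∘ (v ᵥ* M) = (Complex.ofReal ∘ v) ᵥ* cmap M :=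
  funext (RingHom.map_vecMul Complex.ofRealHom M v)

end Complexification

section Controllability

variable {q r : Type*} [Fintype q] [DecidableEq q]

lemma eq_pow_mulVec_add_sum_of_step [Fintype r] {R : Type*} [Semiring R] (F : Matrix q q R)
    (G : Matrix q r R) {x : ℕ → q → R} {u : ℕ → r → R}
    (hx : ∀ k, x (k + 1) = F *ᵥ x k + G *ᵥ u k) (j : ℕ) :
    x j = F ^ j *ᵥ x 0 + ∑ k ∈ Finset.range j, (F ^ (j - 1 - k) * G) *ᵥ u k := by
  induction j with
  | zero => simp
  | succ j ih =>
    have hpow : ∀ k ∈ Finset.range j, F * F ^ (j - 1 - k) = F ^ (j - k) := fun k hk => by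
      rw [← pow_succ', show j - 1 - k + 1 = j - k by grind]
    rw [hx, ih, mulVec_add, mulVec_sum, Finset.sum_range_succ, Nat.add_sub_cancel, Nat.sub_self,
      pow_zero, Matrix.one_mul, mulVec_mulVec, ← pow_succ', add_assoc]
    congr 2
    exact Finset.sum_congr rfl fun k hk => by rw [mulVec_mulVec, ← Matrix.mul_assoc, hpow k hk]

lemma IsCompactElement.exists_biSup_range_eq_top {α : Type*} [CompleteLattice α]
    (htop : IsCompactElement (⊤ : α)) {p : ℕ → α} (hp : ⨆ k, p k = ⊤) :
    ∃ T, ⨆ k ∈ Finset.range T, p k = ⊤ := by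
  obtain ⟨s, hs⟩ := CompleteLattice.IsCompactElement.exists_finset_of_le_iSup _ htop p hp.ge
  refine ⟨s.sup id + 1, top_unique (hs.trans (biSup_mono fun k hk => ?_))⟩
  exact Finset.mem_range.mpr (Nat.lt_succ_of_le (Finset.le_sup (f := id) hk))

lemma controllable_of_iSup_range_eq_top [Fintype r] (F : Matrix q q ℝ) (G : Matrix q r ℝ)
    (hreach : ⨆ k, LinearMap.range (F ^ k * G).mulVecLin = ⊤) : Controllable F G := by
  obtain ⟨T, hT⟩ :=
    ((Submodule.fg_iff_compact ⊤).mp Module.Finite.fg_top).exists_biSup_range_eq_top hreach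
  intro x₀ xf
  obtain ⟨w, hw⟩ := (Submodule.mem_iSup_finset_iff_exists_sum _ (xf - F ^ T *ᵥ x₀)).mp
    (hT ▸ Submodule.mem_top)
  choose v hv using fun k => (w k).2
  let u : ℕ → r → ℝ := fun k => v (T - 1 - k)
  let x : ℕ → q → ℝ := fun k => Nat.rec x₀ (fun k xk => F *ᵥ xk + G *ᵥ u k) k
  have hx : ∀ k, x (k + 1) = F *ᵥ x k + G *ᵥ u k := fun _ => rfl
  refine ⟨T, u, x, rfl, hx, ?_⟩
  rw [eq_pow_mulVec_add_sum_of_step F G hx T,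
    Finset.sum_range_reflect (fun k => (F ^ k * G) *ᵥ v k) T]
  simp only [← mulVecLin_apply, hv, hw]
  exact add_sub_cancel _ _

lemma exists_vecMul_pow_mul_eq_zero_of_iSup_range_ne_top [Fintype r] {K : Type*} [Field K]
    (F : Matrix q q K) (G : Matrix q r K)
    (hreach : ⨆ k, LinearMap.range (F ^ k * G).mulVecLin ≠ ⊤) :
    ∃ η : q → K, η ≠ 0 ∧ ∀ k, η ᵥ* (F ^ k * G) = 0 := by
  classical
  obtain ⟨f, hf, hmap⟩ :=
    Submodule.exists_dual_map_eq_bot_of_lt_top (lt_top_iff_ne_top.mpr hreach) inferInstance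
  refine ⟨(dotProductEquiv K q).symm f, by simpa using hf, fun k => funext fun c => ?_⟩
  have hcol : (F ^ k * G) *ᵥ Pi.single c 1 ∈ ⨆ k, LinearMap.range (F ^ k * G).mulVecLin :=
    Submodule.mem_iSup_of_mem k (LinearMap.mem_range_self _ _)
  have := (Submodule.eq_bot_iff _).mp hmap _ (Submodule.mem_map_of_mem hcol)
  rwa [← (dotProductEquiv K q).apply_symm_apply f, dotProductEquiv_apply_apply,
    dotProduct_mulVec, dotProduct_single, mul_one] at this

lemma exists_left_eigenvector_vecMul_eq_zero {K : Type*} [Field K] [IsAlgClosed K]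
    (F : Matrix q q K) (G : Matrix q r K) {η : q → K} (hη : η ≠ 0)
    (hann : ∀ k, η ᵥ* (F ^ k * G) = 0) :
    ∃ μ : K, ∃ v : q → K, v ≠ 0 ∧ v ᵥ* F = μ • v ∧ v ᵥ* G = 0 := by
  let U : Submodule K (q → K) := Submodule.span K (Set.range fun k : ℕ => η ᵥ* F ^ k)
  have hmem : ∀ k : ℕ, η ᵥ* F ^ k ∈ U := fun k => Submodule.subset_span ⟨k, rfl⟩
  have hinv : ∀ v ∈ U, F.vecMulLinear v ∈ U := by
    refine fun v hv => Submodule.span_induction ?_ ?_ ?_ ?_ hv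
    · rintro _ ⟨k, rfl⟩
      simpa [vecMul_vecMul, ← pow_succ] using hmem (k + 1)
    · simp
    · intro v w _ _ hv hw
      simpa using U.add_mem hv hw
    · intro c v _ hv
      simpa using U.smul_mem c hv
  have hker : U ≤ LinearMap.ker G.vecMulLinear := by
    refine Submodule.span_le.mpr ?_
    rintro _ ⟨k, rfl⟩
    simp [vecMul_vecMul, hann k]
  have : Nontrivial U := ⟨⟨⟨η, by simpa using hmem 0⟩, 0, fun h => hη congr(($h).1)⟩⟩
  obtain ⟨μ, hμ⟩ := Module.End.exists_eigenvalue (F.vecMulLinear.restrict hinv)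
  obtain ⟨v, hv⟩ := hμ.exists_hasEigenvector
  refine ⟨μ, v, fun h => hv.2 (Subtype.ext h), congr(($hv.apply_eq_smul).1), hker v.2⟩

theorem controllable_of_pbh [Fintype r] (F : Matrix q q ℝ) (G : Matrix q r ℝ)
    (hpbh : ∀ (μ : ℂ) (η : q → ℂ), η ≠ 0 → η ᵥ* cmap F = μ • η → η ᵥ* cmap G ≠ 0) :
    Controllable F G := by
  refine controllable_of_iSup_range_eq_top F G (by_contra fun hreach => ?_)
  obtain ⟨η, hη, hann⟩ := exists_vecMul_pow_mul_eq_zero_of_iSup_range_ne_top F G hreach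
  have hηc : Complex.ofReal ∘ η ≠ 0 := fun h =>
    hη (funext fun i => Complex.ofReal_eq_zero.mp (congrFun h i))
  have hannc : ∀ k, (Complex.ofReal ∘ η) ᵥ* (cmap F ^ k * cmap G) = 0 := fun k => by
    rw [← cmap_pow, ← cmap_mul, ← ofReal_comp_vecMul, hann k]
    exact funext fun _ => Complex.ofReal_zero
  obtain ⟨μ, v, hv, hvF, hvG⟩ := exists_left_eigenvector_vecMul_eq_zero _ _ hηc hannc
  exact hpbh μ v hv hvF hvG

end Controllability

section BlockTriangular

variable {K a b : Type*} [CommRing K] [Fintype a] [Fintype b]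

lemma sumElim_vecMul_fromBlocks_eq_smul_iff [DecidableEq a] (F₁₁ : Matrix a a K)
    (F₂₁ : Matrix b a K) (F₂₂ : Matrix b b K) (ξ : a → K) (ζ : b → K) (μ : K) :
    Sum.elim ξ ζ ᵥ* fromBlocks F₁₁ 0 F₂₁ F₂₂ = μ • Sum.elim ξ ζ ↔
      ξ ᵥ* (μ • 1 - F₁₁) = ζ ᵥ* F₂₁ ∧ ζ ᵥ* F₂₂ = μ • ζ := by
  rw [vecMul_sub, vecMul_smul, vecMul_one, sub_eq_iff_eq_add', eq_comm (a := μ • ξ),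
    vecMul_fromBlocks]
  simp only [funext_iff, Sum.forall, Sum.elim_inl, Sum.elim_inr, Pi.smul_apply,
    Function.comp_def, vecMul_zero, zero_add]

lemma sumElim_vecMul_fromBlocks_eq_zero_iff {c d : Type*} (G₁ : Matrix a c K)
    (G₂ : Matrix b d K) (ξ : a → K) (ζ : b → K) :
    Sum.elim ξ ζ ᵥ* fromBlocks G₁ 0 0 G₂ = 0 ↔ ξ ᵥ* G₁ = 0 ∧ ζ ᵥ* G₂ = 0 := by
  rw [vecMul_fromBlocks]
  simp only [funext_iff, Sum.forall, Sum.elim_inl, Sum.elim_inr, Pi.zero_apply,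
    Function.comp_def, vecMul_zero, zero_add, add_zero]

end BlockTriangular

section SampledInput

def hcat {ι a c R : Type*} (M : ι → Matrix a c R) : Matrix a (ι × c) R :=
  Matrix.of fun i q => M q.1 i q.2

lemma cmap_hcat {ι a c : Type*} (M : ι → Matrix a c ℝ) :
    cmap (hcat M) = hcat fun i => cmap (M i) :=
  rfl

lemma vecMul_hcat_eq_zero_of_vecMul_hcat_sub_eq_zero {R a c : Type*} [Ring R] [Fintype a]
    {l : ℕ} (M : ℕ → Matrix a c R) (hM : M 0 = 0) (v : a → R)
    (hv : v ᵥ* hcat (fun t : Fin l => M (l - t) - M (l - 1 - t)) = 0) :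
    v ᵥ* hcat (fun t : Fin l => M (l - t)) = 0 := by
  have hblock : ∀ t : Fin l, v ᵥ* (M (l - t) - M (l - 1 - t)) = 0 := fun t =>
    funext fun c => congrFun hv (t, c)
  have hstep : ∀ s < l, v ᵥ* M (s + 1) = v ᵥ* M s := fun s hs => by
    have := hblock ⟨l - 1 - s, by omega⟩
    rwa [Fin.val_mk, show l - (l - 1 - s) = s + 1 by omega, show l - 1 - (l - 1 - s) = s by omega,
      vecMul_sub, sub_eq_zero] at this
  have hzero : ∀ s ≤ l, v ᵥ* M s = 0 := by
    intro s hs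
    induction s with
    | zero => rw [hM, vecMul_zero]
    | succ s ih => rw [hstep s hs, ih (by omega)]
  exact funext fun q => congrFun (hzero (l - q.1) (by omega)) q.2

noncomputable def inputBlock {N n p : ℕ} (A : Matrix (Fin n) (Fin n) ℝ)
    (B : Matrix (Fin n) (Fin p) ℝ) (Δ : Matrix (Fin N) (Fin N) ℝ) (h : ℝ) (s : ℕ) :
    Matrix (Fin N × Fin n) (Fin N × Fin p) ℝ :=
  Δ ⊗ₖ (intExp A (s * h) * B)

lemma intExp_zero {k : Type*} [Fintype k] [DecidableEq k] (A : Matrix k k ℝ) :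
    intExp A 0 = 0 := by
  ext i j
  simp [intExp]

lemma kronecker_sub_mul {R a b c d e : Type*} [Ring R] [Fintype c] (Δ : Matrix a b R)
    (X Y : Matrix d c R) (B : Matrix c e R) :
    Δ ⊗ₖ ((X - Y) * B) = Δ ⊗ₖ (X * B) - Δ ⊗ₖ (Y * B) := by
  rw [eq_sub_iff_add_eq, ← kronecker_add, Matrix.sub_mul, sub_add_cancel]

noncomputable def fastInput {N n p : ℕ} (A : Matrix (Fin n) (Fin n) ℝ)
    (B : Matrix (Fin n) (Fin p) ℝ) (Δ : Matrix (Fin N) (Fin N) ℝ) (h : ℝ) (l : ℕ) :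
    Matrix (Fin N × Fin n) (Fin l × (Fin N × Fin p)) ℝ :=
  Matrix.of fun a q =>
    if (q.1 : ℕ) = l - 1 then (Δ ⊗ₖ (intExp A h * B)) a q.2
    else (Δ ⊗ₖ ((intExp A ((↑(l - (q.1 : ℕ)) : ℝ) * h)
      - intExp A ((↑(l - 1 - (q.1 : ℕ)) : ℝ) * h)) * B)) a q.2

variable {N n p : ℕ} (A : Matrix (Fin n) (Fin n) ℝ) (B : Matrix (Fin n) (Fin p) ℝ)
  (Δ : Matrix (Fin N) (Fin N) ℝ) (h : ℝ) (l : ℕ)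

lemma fastInput_eq_hcat_sub :
    fastInput A B Δ h l =
      hcat fun t : Fin l => inputBlock A B Δ h (l - t) - inputBlock A B Δ h (l - 1 - t) := by
  ext a ⟨t, c⟩
  simp only [fastInput, hcat, inputBlock, of_apply, ← kronecker_sub_mul]
  split_ifs with ht
  · rw [show l - (t : ℕ) = 1 by omega, show l - 1 - (t : ℕ) = 0 by omega]
    simp [intExp_zero]
  · rfl

lemma vecMul_cmap_hcat_inputBlock_eq_zero {ξ : Fin N × Fin n → ℂ}
    (hξ : ξ ᵥ* cmap (fastInput A B Δ h l) = 0) :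
    ξ ᵥ* cmap (hcat fun t : Fin l => inputBlock A B Δ h (l - t)) = 0 := by
  rw [fastInput_eq_hcat_sub] at hξ
  refine vecMul_hcat_eq_zero_of_vecMul_hcat_sub_eq_zero (fun s => cmap (inputBlock A B Δ h s))
    ?_ ξ ?_
  · simp [inputBlock, intExp_zero, cmap_zero]
  · simpa only [cmap_hcat, cmap_sub] using hξ

end SampledInput

theorem fastControl_controllable_general
    (N n p l : ℕ)
    (A1 A2 : Matrix (Fin n) (Fin n) ℝ) (B1 B2 : Matrix (Fin n) (Fin p) ℝ)
    (Δ1 Δ2 : Matrix (Fin N) (Fin N) ℝ)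
    (h : ℝ)
    -- lifted matrices
    (Φt11 Φt22 Φt21 : Matrix (Fin N × Fin n) (Fin N × Fin n) ℝ)
    (Ψt11 Ψt22 : Matrix (Fin N × Fin n) (Fin l × (Fin N × Fin p)) ℝ)
    (hΨt11 : Ψt11 = Matrix.of fun a q =>
      if (q.1 : ℕ) = l - 1 then (Δ1 ⊗ₖ (intExp A1 h * B1)) a q.2
      else (Δ1 ⊗ₖ ((intExp A1 ((↑(l - (q.1 : ℕ)) : ℝ) * h)
        - intExp A1 ((↑(l - 1 - (q.1 : ℕ)) : ℝ) * h)) * B1)) a q.2)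
    (hΨt22 : Ψt22 = Matrix.of fun a q =>
      if (q.1 : ℕ) = l - 1 then (Δ2 ⊗ₖ (intExp A2 h * B2)) a q.2
      else (Δ2 ⊗ₖ ((intExp A2 ((↑(l - (q.1 : ℕ)) : ℝ) * h)
        - intExp A2 ((↑(l - 1 - (q.1 : ℕ)) : ℝ) * h)) * B2)) a q.2)
    -- concatenations [Δ^K ⊗ 𝓑^K(lh), Δ^K ⊗ 𝓑^K((l−1)h), …, Δ^K ⊗ 𝓑^K(h)]
    (Θ1 Θ2 : Matrix (Fin N × Fin n) (Fin l × (Fin N × Fin p)) ℝ)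
    (hΘ1 : Θ1 = Matrix.of fun a q =>
      (Δ1 ⊗ₖ (intExp A1 ((↑(l - (q.1 : ℕ)) : ℝ) * h) * B1)) a q.2)
    (hΘ2 : Θ2 = Matrix.of fun a q =>
      (Δ2 ⊗ₖ (intExp A2 ((↑(l - (q.1 : ℕ)) : ℝ) * h) * B2)) a q.2)
    -- condition (1)
    (cond1 : ∀ (μ : ℂ) (η : Fin N × Fin n → ℂ), η ≠ 0 →
      η ᵥ* cmap Φt11 = μ • η → η ᵥ* cmap Θ1 ≠ 0)
    -- condition (2)
    (cond2 : ∀ (μ : ℂ) (η ξ : Fin N × Fin n → ℂ), η ≠ 0 →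
      η ᵥ* cmap Φt22 = μ • η →
      ξ ᵥ* (μ • (1 : Matrix (Fin N × Fin n) (Fin N × Fin n) ℂ) - cmap Φt11)
        = η ᵥ* cmap Φt21 →
      Sum.elim (ξ ᵥ* cmap Θ1) (η ᵥ* cmap Θ2) ≠ 0) :
    Controllable (Matrix.fromBlocks Φt11 0 Φt21 Φt22)
      (Matrix.fromBlocks Ψt11 0 0 Ψt22) := by
  subst hΨt11 hΨt22
  refine controllable_of_pbh _ _ fun μ η hη heig hann => ?_
  obtain ⟨ξ, ζ, rfl⟩ : ∃ ξ ζ, η = Sum.elim ξ ζ := ⟨_, _, (Sum.elim_comp_inl_inr η).symm⟩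
  rw [cmap_fromBlocks, cmap_zero, sumElim_vecMul_fromBlocks_eq_smul_iff] at heig
  rw [cmap_fromBlocks, cmap_zero, sumElim_vecMul_fromBlocks_eq_zero_iff] at hann
  obtain ⟨hcoupling, heig₂⟩ := heig
  have hΘ1z : ξ ᵥ* cmap Θ1 = 0 := hΘ1 ▸ vecMul_cmap_hcat_inputBlock_eq_zero A1 B1 Δ1 h l hann.1
  have hΘ2z : ζ ᵥ* cmap Θ2 = 0 := hΘ2 ▸ vecMul_cmap_hcat_inputBlock_eq_zero A2 B2 Δ2 h l hann.2
  by_cases hζ : ζ = 0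
  · subst hζ
    have hξ : ξ ≠ 0 := by rintro rfl; exact hη Sum.elim_zero_zero
    rw [zero_vecMul, vecMul_sub, vecMul_smul, vecMul_one, sub_eq_zero] at hcoupling
    exact cond1 μ ξ hξ hcoupling.symm hΘ1z
  · exact cond2 μ ζ ξ hζ heig₂ hcoupling (by rw [hΘ1z, hΘ2z, Sum.elim_zero_zero])

/-- sufficient controllability condition for the two-layer drive-response
networked sampled-data system under the Fast Control sampling pattern (Corollary 6 in the
paper): transmission channels are sampled with period `l·h`, control channels with period
`h`. Column block `r` (for `r = 0, …, l−1`, left to right) of the lifted input matrix of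
layer `K` is `Δ^K ⊗ (𝓑^K((l−r)h) − 𝓑^K((l−1−r)h))`, the last block being `Δ^K ⊗ 𝓑^K(h)`;
`Θ1, Θ2` are the concatenations `[Δ^K ⊗ 𝓑^K(lh), …, Δ^K ⊗ 𝓑^K(h)]`. -/
theorem fastControl_controllable
    (N n m p l : ℕ) (hl : 1 ≤ l)
    (A1 A2 : Matrix (Fin n) (Fin n) ℝ) (B1 B2 : Matrix (Fin n) (Fin p) ℝ)
    (C1 C2 : Matrix (Fin m) (Fin n) ℝ) (H1 H2 : Matrix (Fin n) (Fin m) ℝ)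
    (W1 W2 : Matrix (Fin N) (Fin N) ℝ) (Δ1 Δ2 : Matrix (Fin N) (Fin N) ℝ)
    (hΔ1d : Δ1.IsDiag) (hΔ2d : Δ2.IsDiag)
    (hΔ1v : ∀ i, Δ1 i i = 0 ∨ Δ1 i i = 1) (hΔ2v : ∀ i, Δ2 i i = 0 ∨ Δ2 i i = 1)
    (D21 : Matrix (Fin N) (Fin N) ℝ) (P21 : Matrix (Fin n) (Fin m) ℝ)
    (h : ℝ) (hh : 0 < h)
    -- lifted matrices
    (Φt11 Φt22 Φt21 : Matrix (Fin N × Fin n) (Fin N × Fin n) ℝ)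
    (hΦt11 : Φt11 = (1 : Matrix (Fin N) (Fin N) ℝ) ⊗ₖ matExp (((l : ℝ) * h) • A1)
        + W1 ⊗ₖ (intExp A1 ((l : ℝ) * h) * H1 * C1))
    (hΦt22 : Φt22 = (1 : Matrix (Fin N) (Fin N) ℝ) ⊗ₖ matExp (((l : ℝ) * h) • A2)
        + W2 ⊗ₖ (intExp A2 ((l : ℝ) * h) * H2 * C2))
    (hΦt21 : Φt21 = D21 ⊗ₖ (intExp A2 ((l : ℝ) * h) * P21 * C1))
    (Ψt11 Ψt22 : Matrix (Fin N × Fin n) (Fin l × (Fin N × Fin p)) ℝ)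
    (hΨt11 : Ψt11 = Matrix.of fun a q =>
      if (q.1 : ℕ) = l - 1 then (Δ1 ⊗ₖ (intExp A1 h * B1)) a q.2
      else (Δ1 ⊗ₖ ((intExp A1 ((↑(l - (q.1 : ℕ)) : ℝ) * h)
        - intExp A1 ((↑(l - 1 - (q.1 : ℕ)) : ℝ) * h)) * B1)) a q.2)
    (hΨt22 : Ψt22 = Matrix.of fun a q =>
      if (q.1 : ℕ) = l - 1 then (Δ2 ⊗ₖ (intExp A2 h * B2)) a q.2
      else (Δ2 ⊗ₖ ((intExp A2 ((↑(l - (q.1 : ℕ)) : ℝ) * h)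
        - intExp A2 ((↑(l - 1 - (q.1 : ℕ)) : ℝ) * h)) * B2)) a q.2)
    -- concatenations [Δ^K ⊗ 𝓑^K(lh), Δ^K ⊗ 𝓑^K((l−1)h), …, Δ^K ⊗ 𝓑^K(h)]
    (Θ1 Θ2 : Matrix (Fin N × Fin n) (Fin l × (Fin N × Fin p)) ℝ)
    (hΘ1 : Θ1 = Matrix.of fun a q =>
      (Δ1 ⊗ₖ (intExp A1 ((↑(l - (q.1 : ℕ)) : ℝ) * h) * B1)) a q.2)
    (hΘ2 : Θ2 = Matrix.of fun a q =>
      (Δ2 ⊗ₖ (intExp A2 ((↑(l - (q.1 : ℕ)) : ℝ) * h) * B2)) a q.2)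
    -- condition (1)
    (cond1 : ∀ (μ : ℂ) (η : Fin N × Fin n → ℂ), η ≠ 0 →
      η ᵥ* cmap Φt11 = μ • η → η ᵥ* cmap Θ1 ≠ 0)
    -- condition (2)
    (cond2 : ∀ (μ : ℂ) (η ξ : Fin N × Fin n → ℂ), η ≠ 0 →
      η ᵥ* cmap Φt22 = μ • η →
      ξ ᵥ* (μ • (1 : Matrix (Fin N × Fin n) (Fin N × Fin n) ℂ) - cmap Φt11)
        = η ᵥ* cmap Φt21 →
      Sum.elim (ξ ᵥ* cmap Θ1) (η ᵥ* cmap Θ2) ≠ 0) :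
    Controllable (Matrix.fromBlocks Φt11 0 Φt21 Φt22)
      (Matrix.fromBlocks Ψt11 0 0 Ψt22) :=
  fastControl_controllable_general N n p l A1 A2 B1 B2 Δ1 Δ2 h Φt11 Φt22 Φt21 Ψt11 Ψt22 hΨt11 hΨt22
    Θ1 Θ2 hΘ1 hΘ2 cond1 cond2
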